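/- Define (y,r) : [0, 2+2π] → ℝ³ × SO(3) piecewise by: on (0,1), y(t) = (t,0,0), d₁ = (1,0,0), d₂(t) = (0, cos(πt), sin(πt)); on (1, 1+π), y(t) = (1+sin(t−1), 0, 1−cos(t−1)), d₁(t) = (cos(t−1), 0, sin(t−1)), d₂ = (0,−1,0); on (1+π, 2+π), y(t) = (2+π−t, 0, 2), d₁ = (−1,0,0), d₂ = (0,−1,0); on (2+π, 2+2π), y(t) = (sin(t−2), 0, 1−cos(t−2)), d₁(t) = (cos(t−2), 0, sin(t−2)), d₂ = (0,−1,0); with d₃ = d₁ × d₂. Then (y, d₁, d₂, d₃) is continuous (y is C¹), y' = d₁ a.e., d₁'·d₂ = 0 a.e., (d₁,d₂,d₃) is an orthonormal frame with determinant 1, and the boundary conditions y(0) = y(2+2π) = 0, (d₁,d₂,d₃)(0) = (e₁,e₂,e₃), (d₁,d₂,d₃)(2+2π) = (e₁,−e₂,−e₃) hold (in the limit sense at the endpoints). -/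

import Mathlib

/-!
The junctions are placed where consecutive pieces of the centerline agree to first order, so
`yM` has derivative `d1M t` at every `t`, not only almost everywhere. For `t < 1` the tangent is
constant, and for `t > 1` it stays in the `x₁x₃`-plane while `d₂ = -e₂`, so `d₁' ⬝ d₂ = 0` off
`t = 1`. Since `d₃ = d₁ × d₂`, orthonormality and `det = 1` reduce, via Lagrange's identity and
the cyclic symmetry of the triple product, to `d₁, d₂` being orthogonal unit vectors.
-/

open Matrix MeasureTheory Real

/-- Centerline of the explicit planar developable Möbius band. -/
noncomputable def yM (t : ℝ) : Fin 3 → ℝ :=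
  if t ≤ 1 then ![t, 0, 0]
  else if t ≤ 1 + π then ![1 + Real.sin (t - 1), 0, 1 - Real.cos (t - 1)]
  else if t ≤ 2 + π then ![2 + π - t, 0, 2]
  else ![Real.sin (t - 2), 0, 1 - Real.cos (t - 2)]

/-- Tangent director `d₁`. -/
noncomputable def d1M (t : ℝ) : Fin 3 → ℝ :=
  if t ≤ 1 then ![1, 0, 0]
  else if t ≤ 1 + π then ![Real.cos (t - 1), 0, Real.sin (t - 1)]
  else if t ≤ 2 + π then ![-1, 0, 0]
  else ![Real.cos (t - 2), 0, Real.sin (t - 2)]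

/-- Transversal director `d₂`. -/
noncomputable def d2M (t : ℝ) : Fin 3 → ℝ :=
  if t ≤ 1 then ![0, Real.cos (π * t), Real.sin (π * t)]
  else ![0, -1, 0]

/-- Normal director `d₃ = d₁ × d₂`. -/
noncomputable def d3M (t : ℝ) : Fin 3 → ℝ := d1M t ⨯₃ d2M t

section Piecewise

variable {E : Type*} [NormedAddCommGroup E] [NormedSpace ℝ E]

theorem hasDerivAt_ite_le_of_lt {f g : ℝ → E} {f' : E} {a t : ℝ} (hf : HasDerivAt f f' t)
    (ht : t < a) : HasDerivAt (fun s => if s ≤ a then f s else g s) f' t :=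
  hf.congr_of_eventuallyEq <| by
    filter_upwards [Iio_mem_nhds ht] with s hs using if_pos hs.le

theorem hasDerivAt_ite_le_of_gt {f g : ℝ → E} {g' : E} {a t : ℝ} (hg : HasDerivAt g g' t)
    (ht : a < t) : HasDerivAt (fun s => if s ≤ a then f s else g s) g' t :=
  hg.congr_of_eventuallyEq <| by
    filter_upwards [Ioi_mem_nhds ht] with s hs using if_neg (not_le.2 hs)

theorem hasDerivAt_ite_le {f g f' g' : ℝ → E} {a : ℝ} (hf : ∀ t, HasDerivAt f (f' t) t)
    (hg : ∀ t, HasDerivAt g (g' t) t) (ha : f a = g a) (ha' : f' a = g' a) (t : ℝ) :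
    HasDerivAt (fun s => if s ≤ a then f s else g s) (if t ≤ a then f' t else g' t) t := by
  rcases lt_trichotomy t a with ht | rfl | ht
  · simpa [ht.le] using hasDerivAt_ite_le_of_lt (g := g) (hf t) ht
  · have hleft : HasDerivWithinAt (fun s => if s ≤ t then f s else g s) (f' t) (Set.Iic t) t :=
      (hf t).hasDerivWithinAt.congr (fun s hs => if_pos hs) (if_pos le_rfl)
    have hright : HasDerivWithinAt (fun s => if s ≤ t then f s else g s) (f' t) (Set.Ici t) t :=
      ha' ▸ (hg t).hasDerivWithinAt.congr
        (fun s hs => by rcases (Set.mem_Ici.1 hs).eq_or_lt with rfl | h <;> simp [*, not_le.2])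
        (by simp [ha])
    simpa [Set.Iic_union_Ici] using hleft.union hright
  · simpa [not_le.2 ht] using hasDerivAt_ite_le_of_gt (f := f) (hg t) ht

end Piecewise

theorem hasDerivAt_vec3 {f g h : ℝ → ℝ} {f' g' h' t : ℝ}
    (hf : HasDerivAt f f' t) (hg : HasDerivAt g g' t) (hh : HasDerivAt h h' t) :
    HasDerivAt (fun s => ![f s, g s, h s]) ![f', g', h'] t := by
  rw [hasDerivAt_pi]
  intro i; fin_cases i <;> simpa

/-- Also holds where `f` is not differentiable, since `deriv` is then `0`. -/
theorem deriv_apply_eq_zero_of_forall_apply_eq {ι : Type*} [Fintype ι] {f : ℝ → ι → ℝ} {i : ι}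
    {c : ℝ} (hf : ∀ s, f s i = c) (t : ℝ) : deriv f t i = 0 := by
  by_cases hd : DifferentiableAt ℝ f t
  · have := hasDerivAt_pi.1 hd.hasDerivAt i
    simp only [hf] at this
    exact this.unique (hasDerivAt_const t c)
  · simp [deriv_zero_of_not_differentiableAt hd]

def IsRightHandedOrthonormal (u v w : Fin 3 → ℝ) : Prop :=
  u ⬝ᵥ u = 1 ∧ v ⬝ᵥ v = 1 ∧ w ⬝ᵥ w = 1 ∧ u ⬝ᵥ v = 0 ∧ u ⬝ᵥ w = 0 ∧ v ⬝ᵥ w = 0 ∧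
    Matrix.det ![u, v, w] = 1

theorem isRightHandedOrthonormal_cross {u v : Fin 3 → ℝ} (hu : u ⬝ᵥ u = 1) (hv : v ⬝ᵥ v = 1)
    (huv : u ⬝ᵥ v = 0) : IsRightHandedOrthonormal u v (u ⨯₃ v) := by
  have hcross : u ⨯₃ v ⬝ᵥ u ⨯₃ v = 1 := by
    rw [cross_dot_cross, hu, hv, huv, dotProduct_comm v u, huv]; norm_num
  refine ⟨hu, hv, hcross, huv, dot_self_cross u v, dot_cross_self u v, ?_⟩
  rw [← triple_product_eq_det, triple_product_permutation, triple_product_permutation, hcross]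

theorem hasDerivAt_yM (t : ℝ) : HasDerivAt yM (d1M t) t := by
  have line₁ (s : ℝ) : HasDerivAt (fun s : ℝ => ![s, 0, 0]) ![1, 0, 0] s :=
    hasDerivAt_vec3 (hasDerivAt_id s) (hasDerivAt_const s 0) (hasDerivAt_const s 0)
  have arc₁ (s : ℝ) : HasDerivAt (fun s => ![1 + Real.sin (s - 1), 0, 1 - Real.cos (s - 1)])
      ![Real.cos (s - 1), 0, Real.sin (s - 1)] s :=
    hasDerivAt_vec3 (by simpa using ((hasDerivAt_id s).sub_const 1).sin.const_add 1)
      (hasDerivAt_const s 0) (by simpa using ((hasDerivAt_id s).sub_const 1).cos.const_sub 1)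
  have line₂ (s : ℝ) : HasDerivAt (fun s : ℝ => ![2 + π - s, 0, 2]) ![-1, 0, 0] s :=
    hasDerivAt_vec3 (by simpa using (hasDerivAt_id s).const_sub (2 + π))
      (hasDerivAt_const s 0) (hasDerivAt_const s 2)
  have arc₂ (s : ℝ) : HasDerivAt (fun s => ![Real.sin (s - 2), 0, 1 - Real.cos (s - 2)])
      ![Real.cos (s - 2), 0, Real.sin (s - 2)] s :=
    hasDerivAt_vec3 (by simpa using ((hasDerivAt_id s).sub_const 2).sin)
      (hasDerivAt_const s 0) (by simpa using ((hasDerivAt_id s).sub_const 2).cos.const_sub 1)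
  refine hasDerivAt_ite_le line₁
    (hasDerivAt_ite_le arc₁ (hasDerivAt_ite_le line₂ arc₂ ?_ ?_) ?_ ?_) ?_ ?_ t
  all_goals norm_num [pi_pos.le]

theorem continuous_yM : Continuous yM :=
  continuous_iff_continuousAt.2 fun t => (hasDerivAt_yM t).continuousAt

theorem continuous_d1M : Continuous d1M := by
  refine continuous_const.if_le (Continuous.if_le (by fun_prop)
    (continuous_const.if_le (by fun_prop) continuous_id continuous_const ?_)
    continuous_id continuous_const ?_) continuous_id continuous_const ?_
  all_goals rintro x rfl; norm_num [pi_pos.le]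

theorem continuous_d2M : Continuous d2M := by
  refine Continuous.if_le (by fun_prop) continuous_const continuous_id continuous_const ?_
  rintro x rfl; norm_num

theorem continuous_d3M : Continuous d3M := by
  have := continuous_d1M
  have := continuous_d2M
  unfold d3M; fun_prop

theorem d1M_dotProduct_self (t : ℝ) : d1M t ⬝ᵥ d1M t = 1 := by
  unfold d1M; split_ifs <;> simp [← sq]

theorem d2M_dotProduct_self (t : ℝ) : d2M t ⬝ᵥ d2M t = 1 := by
  unfold d2M; split_ifs <;> simp [← sq]

theorem d1M_dotProduct_d2M (t : ℝ) : d1M t ⬝ᵥ d2M t = 0 := by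
  unfold d1M d2M; split_ifs <;> simp

theorem d1M_apply_one (t : ℝ) : d1M t 1 = 0 := by
  unfold d1M; split_ifs <;> rfl

theorem deriv_d1M_dotProduct_d2M {t : ℝ} (ht : t ≠ 1) : deriv d1M t ⬝ᵥ d2M t = 0 := by
  rcases ht.lt_or_gt with ht | ht
  · have : d1M =ᶠ[nhds t] fun _ => ![1, 0, 0] := by
      filter_upwards [Iio_mem_nhds ht] with s hs using if_pos hs.le
    rw [this.deriv_eq, deriv_const, zero_dotProduct]
  · rw [d2M, if_neg (not_le.2 ht), vec3_dotProduct,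
      deriv_apply_eq_zero_of_forall_apply_eq d1M_apply_one]
    simp

/-- The explicit framed curve `(yM, d1M, d2M, d3M)` on `[0, 2+2π]` is a developable
Möbius band with planar centerline: the frame is continuous and `yM` is `C¹` with
`yM' = d₁` a.e., the constraint `d₁'·d₂ = 0` holds a.e., `(d₁,d₂,d₃)` is an
orthonormal frame of determinant `1`, and the Möbius boundary conditions
`y(0) = y(ℓ) = 0`, `r(0) = I`, `r(ℓ) = (e₁|−e₂|−e₃)` hold, where `ℓ = 2 + 2π`. -/
theorem mobius_example :
    ContinuousOn yM (Set.Icc 0 (2 + 2 * π)) ∧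
    ContinuousOn d1M (Set.Icc 0 (2 + 2 * π)) ∧
    ContinuousOn d2M (Set.Icc 0 (2 + 2 * π)) ∧
    ContinuousOn d3M (Set.Icc 0 (2 + 2 * π)) ∧
    (∀ᵐ t ∂(volume.restrict (Set.Ioo 0 (2 + 2 * π))), HasDerivAt yM (d1M t) t) ∧
    (∀ᵐ t ∂(volume.restrict (Set.Ioo 0 (2 + 2 * π))), deriv d1M t ⬝ᵥ d2M t = 0) ∧
    (∀ t ∈ Set.Icc 0 (2 + 2 * π),
      d1M t ⬝ᵥ d1M t = 1 ∧ d2M t ⬝ᵥ d2M t = 1 ∧ d3M t ⬝ᵥ d3M t = 1 ∧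
      d1M t ⬝ᵥ d2M t = 0 ∧ d1M t ⬝ᵥ d3M t = 0 ∧ d2M t ⬝ᵥ d3M t = 0 ∧
      Matrix.det ![d1M t, d2M t, d3M t] = 1) ∧
    yM 0 = 0 ∧ yM (2 + 2 * π) = 0 ∧
    d1M 0 = ![1, 0, 0] ∧ d2M 0 = ![0, 1, 0] ∧ d3M 0 = ![0, 0, 1] ∧
    d1M (2 + 2 * π) = ![1, 0, 0] ∧ d2M (2 + 2 * π) = ![0, -1, 0] ∧
    d3M (2 + 2 * π) = ![0, 0, -1] := by
  have hA : ¬ (2 + 2 * π : ℝ) ≤ 1 := by linarith [pi_pos]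
  have hB : ¬ (2 + 2 * π : ℝ) ≤ 1 + π := by linarith [pi_pos]
  have hC : ¬ (2 + 2 * π : ℝ) ≤ 2 + π := by linarith [pi_pos]
  refine ⟨continuous_yM.continuousOn, continuous_d1M.continuousOn, continuous_d2M.continuousOn,
    continuous_d3M.continuousOn, ae_of_all _ hasDerivAt_yM,
    ae_restrict_of_ae ((volume.ae_ne 1).mono fun _ => deriv_d1M_dotProduct_d2M),
    fun t _ => isRightHandedOrthonormal_cross (d1M_dotProduct_self t)
      (d2M_dotProduct_self t) (d1M_dotProduct_d2M t), ?_⟩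
  norm_num [yM, d1M, d2M, d3M, cross_apply, hA, hB, hC, Matrix.cons_val_two,
    ← Matrix.zero_empty]
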